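/- arXiv:1603.08453 — 9 statements merged into one kernel-verified Lean document; each statement's English description precedes it below -/
import Mathlib

section
/- For any multiplicative functions f, g, h from the positive integers to the closed unit disc, and any 1 ≤ y ≤ x, the pretentious distance satisfies the triangle inequality: D(f,g;y;x) + D(g,h;y;x) ≥ D(f,h;y;x), where D(f,g;y;x) = (∑_{y ≤ p ≤ x, p prime} (1 - Re(f(p) conj(g(p))))/p)^{1/2}. -/
open Finset ComplexConjugate

/-!
A point `z` of the closed unit disc lifts to the unit vector `(z, √(1 - |z|²) eᵢ)`, and when
different functions use orthonormal directions `eᵢ` the quantity `1 - Re (z w̄)` becomes half the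
squared distance between the lifts. Weighting by `p^{-1/2}` and collecting the primes into an
`ℓ²` vector, `√2 · D(F, G; y; x)` is the distance between the vectors of `F` and `G`, so the
triangle inequality for `D` is the one for that norm.
-/

section

variable {ι α : Type*} [Fintype ι] [DecidableEq ι]

noncomputable def discLift (z : ℂ) (i : ι) : WithLp 2 (ℂ × EuclideanSpace ℝ ι) :=
  WithLp.toLp 2 (z, √(1 - ‖z‖ ^ 2) • EuclideanSpace.single i 1)

lemma norm_discLift_sub_sq {z w : ℂ} (hz : ‖z‖ ≤ 1) (hw : ‖w‖ ≤ 1) {i j : ι} (hij : i ≠ j) :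
    ‖discLift z i - discLift w j‖ ^ 2 = 2 * (1 - (z * conj w).re) := by
  have hz' : 0 ≤ 1 - ‖z‖ ^ 2 := by nlinarith [norm_nonneg z]
  have hw' : 0 ≤ 1 - ‖w‖ ^ 2 := by nlinarith [norm_nonneg w]
  have hfst : ‖z - w‖ ^ 2 = ‖z‖ ^ 2 + ‖w‖ ^ 2 - 2 * (z * conj w).re := by
    simp only [Complex.sq_norm, Complex.normSq_sub]
  have hsnd : ‖√(1 - ‖z‖ ^ 2) • EuclideanSpace.single i (1 : ℝ)
      - √(1 - ‖w‖ ^ 2) • EuclideanSpace.single j 1‖ ^ 2 = (1 - ‖z‖ ^ 2) + (1 - ‖w‖ ^ 2) := by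
    rw [norm_sub_sq_real]
    simp [norm_smul, inner_smul_left, inner_smul_right, EuclideanSpace.inner_single_left, hij,
      Real.sq_sqrt, hz', hw']
  rw [WithLp.prod_norm_sq_eq_of_L2, WithLp.sub_fst, WithLp.sub_snd]
  simp only [discLift, WithLp.toLp_fst, WithLp.toLp_snd, hfst, hsnd]
  ring

noncomputable def pretentiousVec (s : Finset α) (w : α → ℝ) (F : α → ℂ) (i : ι) :
    PiLp 2 (fun _ : s ↦ WithLp 2 (ℂ × EuclideanSpace ℝ ι)) :=
  WithLp.toLp 2 fun p ↦ (√(w p))⁻¹ • discLift (F p) i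

lemma norm_pretentiousVec_sub {s : Finset α} {w : α → ℝ} (hw : ∀ p ∈ s, 0 ≤ w p) {F G : α → ℂ}
    (hF : ∀ p, ‖F p‖ ≤ 1) (hG : ∀ p, ‖G p‖ ≤ 1) {i j : ι} (hij : i ≠ j) :
    ‖pretentiousVec s w F i - pretentiousVec s w G j‖
      = √2 * √(∑ p ∈ s, (1 - (F p * conj (G p)).re) / w p) := by
  rw [PiLp.norm_eq_of_L2, ← Real.sqrt_mul zero_le_two, mul_sum, ← sum_coe_sort s]
  congr 1
  refine sum_congr rfl fun p _ ↦ ?_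
  rw [PiLp.sub_apply, pretentiousVec, pretentiousVec, PiLp.toLp_apply, PiLp.toLp_apply,
    ← smul_sub, norm_smul, mul_pow, norm_discLift_sub_sq (hF p) (hG p) hij, norm_inv,
    Real.norm_eq_abs, abs_of_nonneg (Real.sqrt_nonneg _), inv_pow, Real.sq_sqrt (hw p p.2)]
  ring

lemma sqrt_sum_one_sub_re_mul_conj_le_add {s : Finset α} {w : α → ℝ} (hw : ∀ p ∈ s, 0 ≤ w p)
    {F G H : α → ℂ} (hF : ∀ p, ‖F p‖ ≤ 1) (hG : ∀ p, ‖G p‖ ≤ 1) (hH : ∀ p, ‖H p‖ ≤ 1) :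
    √(∑ p ∈ s, (1 - (F p * conj (H p)).re) / w p)
      ≤ √(∑ p ∈ s, (1 - (F p * conj (G p)).re) / w p)
        + √(∑ p ∈ s, (1 - (G p * conj (H p)).re) / w p) := by
  let V := pretentiousVec (ι := Fin 3) s w
  have htri : ‖V F 0 - V H 2‖ ≤ ‖V F 0 - V G 1‖ + ‖V G 1 - V H 2‖ :=
    norm_sub_le_norm_sub_add_norm_sub _ _ _
  rw [norm_pretentiousVec_sub hw hF hH (by decide), norm_pretentiousVec_sub hw hF hG (by decide),
    norm_pretentiousVec_sub hw hG hH (by decide), ← mul_add] at htri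
  exact le_of_mul_le_mul_left htri (by positivity)

end

theorem pretentious_distance_triangle_general
    (f g h : ℕ → ℂ)
    (hfb : ∀ n, ‖f n‖ ≤ 1)
    (hgb : ∀ n, ‖g n‖ ≤ 1)
    (hhb : ∀ n, ‖h n‖ ≤ 1)
    (D : (ℕ → ℂ) → (ℕ → ℂ) → ℕ → ℕ → ℝ)
    (hD : ∀ F G y x, D F G y x =
      Real.sqrt (∑ p ∈ (Finset.Icc y x).filter Nat.Prime,
        (1 - (F p * (starRingEnd ℂ) (G p)).re) / p))
    (y x : ℕ) :
    D f h y x ≤ D f g y x + D g h y x := by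
  simp only [hD]
  exact sqrt_sum_one_sub_re_mul_conj_le_add (fun p _ ↦ Nat.cast_nonneg p) hfb hgb hhb

/-- Pretentious distance triangle inequality for multiplicative functions bounded by 1. -/
theorem pretentious_distance_triangle
    (f g h : ℕ → ℂ)
    (hf1 : f 1 = 1) (hg1 : g 1 = 1) (hh1 : h 1 = 1)
    (hfmul : ∀ m n, Nat.Coprime m n → f (m * n) = f m * f n)
    (hgmul : ∀ m n, Nat.Coprime m n → g (m * n) = g m * g n)
    (hhmul : ∀ m n, Nat.Coprime m n → h (m * n) = h m * h n)
    (hfb : ∀ n, ‖f n‖ ≤ 1)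
    (hgb : ∀ n, ‖g n‖ ≤ 1)
    (hhb : ∀ n, ‖h n‖ ≤ 1)
    (D : (ℕ → ℂ) → (ℕ → ℂ) → ℕ → ℕ → ℝ)
    (hD : ∀ F G y x, D F G y x =
      Real.sqrt (∑ p ∈ (Finset.Icc y x).filter Nat.Prime,
        (1 - (F p * (starRingEnd ℂ) (G p)).re) / p))
    (y x : ℕ) (hy : 1 ≤ y) (hyx : y ≤ x) :
    D f h y x ≤ D f g y x + D g h y x :=
  pretentious_distance_triangle_general f g h hfb hgb hhb D hD y x
end

section
/- Let f : ℕ → ℂ be multiplicative with |f(n)| ≤ 1 for all n. Then the limit M_p(f) = lim_{x→∞} (1/x) ∑_{n ≤ x} f_p(n) exists and equals (1 − 1/p) ∑_{k ≥ 0} f(p^k)/p^k, where f_p is the multiplicative function agreeing with f on powers of the prime p and equal to 1 on powers of all other primes. -/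
/-!
The value `f_p(n) = f(p ^ v_p(n))` depends only on `v_p(n)`, and among `n ≤ x` exactly
`⌊x/p^k⌋ - ⌊x/p^(k+1)⌋` have `v_p(n) = k`. So the average of `f_p` up to `x` is
`∑ₖ f(p^k) (⌊x/p^k⌋ - ⌊x/p^(k+1)⌋)/x`. Each weight tends to `p^(-k) - p^(-k-1)` and is at most
`p^(-k)`, so dominated convergence (Tannery's theorem) gives the limit
`∑ₖ f(p^k) (p^(-k) - p^(-k-1)) = (1 - 1/p) ∑ₖ f(p^k)/p^k`.
-/

open Finset Filter Topology

theorem tendsto_natCast_div_div_atTop {m : ℕ} (hm : m ≠ 0) :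
    Tendsto (fun x : ℕ => ((x / m : ℕ) : ℝ) / x) atTop (𝓝 (1 / m)) := by
  refine ((tendsto_nat_floor_mul_div_atTop (a := 1 / (m : ℝ)) (by positivity)).comp
    tendsto_natCast_atTop_atTop).congr fun x => ?_
  rw [Function.comp_apply, one_div_mul_eq_div, Nat.floor_div_eq_div]

namespace Nat

theorem card_filter_factorization_eq {p : ℕ} (hp : p.Prime) (x k : ℕ) :
    #{n ∈ Icc 1 x | n.factorization p = k} = x / p ^ k - x / p ^ (k + 1) := by
  have hfiber : {n ∈ Icc 1 x | n.factorization p = k}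
      = {n ∈ Ioc 0 x | p ^ k ∣ n} \ {n ∈ Ioc 0 x | p ^ (k + 1) ∣ n} := by
    rw [← filter_and_not, ← Icc_add_one_left_eq_Ioc]
    refine filter_congr fun n hn => ?_
    have hn0 : n ≠ 0 := by grind
    rw [hp.pow_dvd_iff_le_factorization hn0, hp.pow_dvd_iff_le_factorization hn0]
    omega
  have hsub : {n ∈ Ioc 0 x | p ^ (k + 1) ∣ n} ⊆ {n ∈ Ioc 0 x | p ^ k ∣ n} :=
    monotone_filter_right _ fun _ _ => (pow_dvd_pow p k.le_succ).trans
  rw [hfiber, card_sdiff_of_subset hsub, Ioc_filter_dvd_card_eq_div,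
    Ioc_filter_dvd_card_eq_div]

theorem sum_Icc_comp_factorization {M : Type*} [AddCommMonoid M] {p : ℕ} (hp : p.Prime)
    (g : ℕ → M) (x : ℕ) :
    ∑ n ∈ Icc 1 x, g (n.factorization p)
      = ∑ k ∈ range (x + 1), (x / p ^ k - x / p ^ (k + 1)) • g k := by
  have hmaps : ∀ n ∈ Icc 1 x, n.factorization p ∈ range (x + 1) := fun n hn => by
    have hn : 1 ≤ n ∧ n ≤ x := mem_Icc.mp hn
    have : p ^ n.factorization p ≤ n := le_of_dvd hn.1 (ordProj_dvd n p)
    have := Nat.lt_pow_self (n := n.factorization p) hp.one_lt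
    grind
  rw [← sum_fiberwise_of_maps_to hmaps]
  refine sum_congr rfl fun k _ => ?_
  rw [sum_congr rfl fun n hn => congrArg g (mem_filter.mp hn).2, sum_const,
    card_filter_factorization_eq hp]

theorem tendsto_div_pow_sub_div_pow_succ_div {p : ℕ} (hp : p ≠ 0) (k : ℕ) :
    Tendsto (fun x : ℕ => ((x / p ^ k - x / p ^ (k + 1) : ℕ) : ℝ) / x) atTop
      (𝓝 ((p : ℝ)⁻¹ ^ k - (p : ℝ)⁻¹ ^ (k + 1))) := by
  have hdiv_anti (x : ℕ) : x / p ^ (k + 1) ≤ x / p ^ k :=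
    div_le_div_left (pow_le_pow_right₀ (one_le_iff_ne_zero.mpr hp) k.le_succ)
      (pow_pos (pos_of_ne_zero hp) k)
  convert (tendsto_natCast_div_div_atTop (pow_ne_zero k hp)).sub
    (tendsto_natCast_div_div_atTop (pow_ne_zero (k + 1) hp)) using 1
  · ext x
    rw [cast_sub (hdiv_anti x), sub_div]
  · simp [inv_pow]

theorem div_pow_sub_div_pow_succ_div_le (p x k : ℕ) :
    ((x / p ^ k - x / p ^ (k + 1) : ℕ) : ℝ) / x ≤ (p : ℝ)⁻¹ ^ k := by
  rcases x.eq_zero_or_pos with rfl | hx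
  · simp
  calc ((x / p ^ k - x / p ^ (k + 1) : ℕ) : ℝ) / x
      ≤ ((x / p ^ k : ℕ) : ℝ) / x := by gcongr; exact sub_le _ _
    _ ≤ ((x : ℝ) / (p ^ k : ℕ)) / x := by gcongr; exact cast_div_le
    _ = (p : ℝ)⁻¹ ^ k := by field_simp; simp

theorem tendsto_average_comp_factorization {p : ℕ} (hp : p.Prime) {g : ℕ → ℂ} {C : ℝ}
    (hg : ∀ k, ‖g k‖ ≤ C) :
    Tendsto (fun x : ℕ => (x : ℂ)⁻¹ * ∑ n ∈ Icc 1 x, g (n.factorization p)) atTop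
      (𝓝 ((1 - 1 / (p : ℂ)) * ∑' k : ℕ, g k / (p : ℂ) ^ k)) := by
  set w : ℕ → ℕ → ℝ := fun x k => ((x / p ^ k - x / p ^ (k + 1) : ℕ) : ℝ) / x
  have havg (x : ℕ) :
      (x : ℂ)⁻¹ * ∑ n ∈ Icc 1 x, g (n.factorization p) = ∑' k, (w x k : ℂ) * g k := by
    rw [sum_Icc_comp_factorization hp, mul_sum, tsum_eq_sum]
    · refine sum_congr rfl fun k _ => ?_
      simp only [w, nsmul_eq_mul]
      push_cast
      ring
    · intro k hk
      have hx : x < p ^ k := by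
        have := Nat.lt_pow_self (n := k) hp.one_lt
        grind
      simp [w, div_eq_of_lt hx]
  have hlim : (1 - 1 / (p : ℂ)) * ∑' k : ℕ, g k / (p : ℂ) ^ k
      = ∑' k, (((p : ℝ)⁻¹ ^ k - (p : ℝ)⁻¹ ^ (k + 1) : ℝ) : ℂ) * g k := by
    rw [← tsum_mul_left]
    refine tsum_congr fun k => ?_
    have : (p : ℂ) ≠ 0 := by exact_mod_cast hp.ne_zero
    push_cast
    rw [inv_pow, inv_pow]
    field_simp
    ring
  have hC : 0 ≤ C := (norm_nonneg _).trans (hg 0)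
  simp only [havg, hlim]
  refine tendsto_tsum_of_dominated_convergence (bound := fun k => (p : ℝ)⁻¹ ^ k * C)
    ((summable_geometric_of_lt_one (by positivity)
      (inv_lt_one_of_one_lt₀ (by exact_mod_cast hp.one_lt))).mul_right C)
    (fun k => ((Complex.continuous_ofReal.tendsto _).comp
      (tendsto_div_pow_sub_div_pow_succ_div hp.ne_zero k)).mul_const (g k))
    (Eventually.of_forall fun x k => ?_)
  rw [norm_mul, Complex.norm_real, Real.norm_of_nonneg (by positivity)]
  exact mul_le_mul (div_pow_sub_div_pow_succ_div_le p x k) (hg k) (norm_nonneg _)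
    (by positivity)

end Nat

theorem mean_value_local_factor_general
    (f : ℕ → ℂ)
    (hfb : ∀ n, ‖f n‖ ≤ 1)
    (p : ℕ) (hp : p.Prime) :
    Tendsto (fun x : ℕ => (x : ℂ)⁻¹ * ∑ n ∈ Finset.Icc 1 x, f (p ^ (n.factorization p)))
      atTop
      (nhds ((1 - 1 / (p : ℂ)) * ∑' k : ℕ, f (p ^ k) / (p : ℂ) ^ k)) :=
  Nat.tendsto_average_comp_factorization (g := fun k => f (p ^ k)) hp fun k => hfb (p ^ k)

/-- The mean value of the local factor `f_p(n) = f(p^{v_p(n)})` of a multiplicative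
function `f` bounded by `1` exists and equals `(1 - 1/p) ∑_{k ≥ 0} f(p^k)/p^k`. -/
theorem mean_value_local_factor
    (f : ℕ → ℂ) (hf1 : f 1 = 1)
    (hfmul : ∀ m n, Nat.Coprime m n → f (m * n) = f m * f n)
    (hfb : ∀ n, ‖f n‖ ≤ 1)
    (p : ℕ) (hp : p.Prime) :
    Tendsto (fun x : ℕ => (x : ℂ)⁻¹ * ∑ n ∈ Finset.Icc 1 x, f (p ^ (n.factorization p)))
      atTop
      (nhds ((1 - 1 / (p : ℂ)) * ∑' k : ℕ, f (p ^ k) / (p : ℂ) ^ k)) :=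
  mean_value_local_factor_general f hfb p hp
end

section
/- Let f : ℕ → ℂ be multiplicative with |f(n)| ≤ 1 and M_p(f) = (1 − 1/p) ∑_{k ≥ 0} f(p^k)/p^k for a prime p. Then M_p(f) = 0 if and only if p = 2 and f(2^k) = −1 for all k ≥ 1. -/
/-!
Since `f 1 = 1` and `‖f (p ^ k)‖ ≤ 1`, the tail `∑_{k ≥ 1} f(p^k)/p^k` has norm at most
`∑_{k ≥ 1} p^{-k} = 1/(p - 1) ≤ 1`. The series vanishes only if this tail is `-1`, which forces
equality in the triangle inequality: every term `f(p^k)/p^k` equals `-p^{-k}`, and then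
`1/(p - 1) = 1`, i.e. `p = 2`.
-/

theorem Complex.eq_ofReal_of_norm_le_of_tsum_le_re {ι : Type*} {z : ι → ℂ} {b : ι → ℝ}
    (hb : Summable b) (hzb : ∀ i, ‖z i‖ ≤ b i) (hsum : ∑' i, b i ≤ (∑' i, z i).re) (i : ι) :
    z i = b i := by
  have hz : Summable z := hb.of_norm_bounded hzb
  have hre_le : ∀ j, (z j).re ≤ b j := fun j => (re_le_norm _).trans (hzb j)
  have hre : (z i).re = b i := by
    by_contra hne
    have hlt := Summable.tsum_lt_tsum hre_le ((hre_le i).lt_of_ne hne)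
      (reCLM.summable hz) hb
    rw [← re_tsum hz] at hlt
    linarith
  have him : (z i).im = 0 := abs_re_eq_norm.1 <| by
    rw [abs_of_nonneg (hre ▸ (norm_nonneg _).trans (hzb i))]
    exact (re_le_norm _).antisymm (hre ▸ hzb i)
  exact ext (by simp [hre]) (by simp [him])

theorem hasSum_inv_pow_succ {x : ℝ} (hx : 1 < x) :
    HasSum (fun k : ℕ => x⁻¹ ^ (k + 1)) (x - 1)⁻¹ := by
  have hx1 : x - 1 ≠ 0 := by linarith
  have hsum : x⁻¹ * (1 - x⁻¹)⁻¹ = (x - 1)⁻¹ := by field_simp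
  simpa only [← pow_succ', hsum] using
    (hasSum_geometric_of_lt_one (by positivity) (inv_lt_one_of_one_lt₀ hx)).mul_left x⁻¹

theorem tsum_div_pow_eq_zero_iff {a : ℕ → ℂ} (ha0 : a 0 = 1) (ha : ∀ k, ‖a k‖ ≤ 1) {x : ℝ}
    (hx : 2 ≤ x) : ∑' k, a k / (x : ℂ) ^ k = 0 ↔ x = 2 ∧ ∀ k, 1 ≤ k → a k = -1 := by
  have hgeom := hasSum_inv_pow_succ (by linarith : 1 < x)
  have hbound : ∀ k, ‖a k / (x : ℂ) ^ k‖ ≤ x⁻¹ ^ k := fun k => by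
    rw [norm_div, norm_pow, Complex.norm_real, Real.norm_of_nonneg (by linarith), inv_pow,
      ← one_div]
    exact div_le_div_of_nonneg_right (ha k) (by positivity)
  have hsummable : Summable fun k => a k / (x : ℂ) ^ k :=
    (summable_geometric_of_lt_one (by positivity) (inv_lt_one_of_one_lt₀ (by linarith))
      |>.of_norm_bounded hbound)
  have hsplit : ∑' k, a k / (x : ℂ) ^ k = 1 + ∑' k, a (k + 1) / (x : ℂ) ^ (k + 1) := by
    simp [hsummable.tsum_eq_zero_add, ha0]
  constructor
  · intro h
    have htail : ∑' k, -(a (k + 1) / (x : ℂ) ^ (k + 1)) = 1 := by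
      rw [tsum_neg]; linear_combination hsplit - h
    have hterm_eq := Complex.eq_ofReal_of_norm_le_of_tsum_le_re hgeom.summable
      (fun k => (norm_neg _).trans_le (hbound (k + 1)))
      (by rw [hgeom.tsum_eq, htail, Complex.one_re]; exact inv_le_one_of_one_le₀ (by linarith))
    have hx2 : x = 2 := by
      have hsum : (((x - 1)⁻¹ : ℝ) : ℂ) = 1 := by
        rw [← hgeom.tsum_eq, Complex.ofReal_tsum, ← tsum_congr hterm_eq, htail]
      have : (x - 1)⁻¹ = 1 := by exact_mod_cast hsum
      rw [inv_eq_one] at this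
      linarith
    subst hx2
    refine ⟨rfl, fun k hk => ?_⟩
    obtain ⟨j, rfl⟩ := Nat.exists_eq_add_of_le' hk
    have := hterm_eq j
    push_cast at this
    field_simp at this
    rw [← mul_pow] at this
    norm_num at this
    linear_combination -this
  · rintro ⟨rfl, ha1⟩
    have hterm : ∀ k, a (k + 1) / ((2 : ℝ) : ℂ) ^ (k + 1) = -(((2 : ℝ)⁻¹ ^ (k + 1) : ℝ) : ℂ) :=
      fun k => by rw [ha1 (k + 1) k.succ_pos]; push_cast; rw [inv_pow]; ring
    rw [hsplit, tsum_congr hterm, tsum_neg, ← Complex.ofReal_tsum, hgeom.tsum_eq]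
    norm_num

theorem local_mean_value_eq_zero_iff_general
    (f : ℕ → ℂ) (hf1 : f 1 = 1)
    (hfb : ∀ n, ‖f n‖ ≤ 1)
    (p : ℕ) (hp : p.Prime) :
    (1 - 1 / (p : ℂ)) * ∑' k : ℕ, f (p ^ k) / (p : ℂ) ^ k = 0 ↔
      p = 2 ∧ ∀ k : ℕ, 1 ≤ k → f (2 ^ k) = -1 := by
  have hp2 : (2 : ℝ) ≤ p := by exact_mod_cast hp.two_le
  have hfactor : 1 - 1 / (p : ℂ) ≠ 0 := by
    rw [sub_ne_zero, ne_comm, one_div, Ne, inv_eq_one]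
    exact_mod_cast hp.one_lt.ne'
  have key := tsum_div_pow_eq_zero_iff (a := fun k => f (p ^ k)) (by simpa using hf1)
    (fun k => hfb _) hp2
  push_cast at key
  have hcast : (p : ℝ) = 2 ↔ p = 2 := by norm_cast
  rw [mul_eq_zero, or_iff_right hfactor, key, hcast]
  exact and_congr_right fun h => by subst h; rfl

/-- `M_p(f) = (1 - 1/p) ∑_{k≥0} f(p^k)/p^k` vanishes iff `p = 2` and `f(2^k) = -1`
for all `k ≥ 1`. -/
theorem local_mean_value_eq_zero_iff
    (f : ℕ → ℂ) (hf1 : f 1 = 1)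
    (hfmul : ∀ m n, Nat.Coprime m n → f (m * n) = f m * f n)
    (hfb : ∀ n, ‖f n‖ ≤ 1)
    (p : ℕ) (hp : p.Prime) :
    (1 - 1 / (p : ℂ)) * ∑' k : ℕ, f (p ^ k) / (p : ℂ) ^ k = 0 ↔
      p = 2 ∧ ∀ k : ℕ, 1 ≤ k → f (2 ^ k) = -1 :=
  local_mean_value_eq_zero_iff_general f hf1 hfb p hp
end

section
/- Let f : ℕ → ℂ be multiplicative with |f(n)| ≤ 1 for all n. Suppose f(2^k) = −1 for all k ≥ 1 and there exists M such that f(p^k) = f(p^{k−1}) for all prime powers p^k ≥ M. Then there exists an integer m ≥ 1 with f(n + m) = f(n) for all n ≥ 1 and ∑_{n=1}^m f(n) = 0. -/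
/-!
Since `f (p ^ k)` stabilises once `p ^ k ≥ M`, we get `f (p ^ k) = 1` for every prime `p ≥ M`,
and `f n = f (gcd n m)` for `n ≥ 1` as soon as `m` contains a high enough power of every prime
below `M`; hence `f` has period `m`. For even `m`, the rules `f (2n) = -f n` (`n` odd) and
`f (2n) = f n` (`n` even) then force the sum of `f` over a period to vanish.
-/

open Finset

section Multiplicative

variable {β : Type*} {f : ℕ → β}

theorem apply_pow_eq_apply_pow_min_of_stable {M p v : ℕ} (hp : 1 ≤ p)
    (hstable : ∀ k, 1 ≤ k → M ≤ p ^ k → f (p ^ k) = f (p ^ (k - 1)))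
    (hv : M ≤ p ^ (v + 1)) (a : ℕ) : f (p ^ a) = f (p ^ min a v) := by
  induction a with
  | zero => simp
  | succ a ih =>
    rcases le_or_gt (a + 1) v with h | h
    · rw [min_eq_left h]
    · rw [hstable (a + 1) (by omega) (hv.trans (Nat.pow_le_pow_right hp h)), Nat.add_sub_cancel,
        ih, min_eq_right (by omega), min_eq_right (by omega)]

variable [CommMonoid β]

theorem apply_eq_apply_gcd_of_forall_prime_pow (hf1 : f 1 = 1)
    (hfmul : ∀ m n, Nat.Coprime m n → f (m * n) = f m * f n) {m n : ℕ} (hm : m ≠ 0) (hn : n ≠ 0)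
    (hpow : ∀ p, p.Prime → ∀ a, f (p ^ a) = f (p ^ min a (m.factorization p))) :
    f n = f (n.gcd m) := by
  classical
  rw [Nat.multiplicative_factorization f hfmul hf1 hn,
    Nat.multiplicative_factorization f hfmul hf1 (Nat.gcd_ne_zero_left hn),
    Nat.factorization_gcd hn hm,
    Finsupp.prod_of_support_subset _ (Nat.support_factorization n).subset _ (by simp [hf1]),
    Finsupp.prod_of_support_subset _ (s := n.primeFactors) (by simp [Finsupp.support_inf]) _
      (by simp [hf1])]
  exact prod_congr rfl fun p hp => hpow p (Nat.prime_of_mem_primeFactors hp) _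

theorem apply_add_eq_of_forall_prime_pow (hf1 : f 1 = 1)
    (hfmul : ∀ m n, Nat.Coprime m n → f (m * n) = f m * f n) {m n : ℕ} (hm : m ≠ 0) (hn : n ≠ 0)
    (hpow : ∀ p, p.Prime → ∀ a, f (p ^ a) = f (p ^ min a (m.factorization p))) :
    f (n + m) = f n := by
  rw [apply_eq_apply_gcd_of_forall_prime_pow hf1 hfmul hm (by omega) hpow, Nat.gcd_add_self_left,
    ← apply_eq_apply_gcd_of_forall_prime_pow hf1 hfmul hm hn hpow]

end Multiplicative

theorem Nat.le_pow_factorization_factorial_pow_add_one (n : ℕ) {p : ℕ} (hp : p.Prime) :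
    n ≤ p ^ ((n.factorial ^ n).factorization p + 1) := by
  rcases le_or_gt p n with hpn | hpn
  · have hdvd : 1 ≤ n.factorial.factorization p :=
      hp.factorization_pos_of_dvd (Nat.factorial_ne_zero n) (Nat.dvd_factorial hp.pos hpn)
    have hv : n ≤ (n.factorial ^ n).factorization p := by
      simpa [Nat.factorization_pow] using Nat.le_mul_of_pos_right n hdvd
    exact hv.trans (Nat.lt_pow_self hp.one_lt).le |>.trans (Nat.pow_le_pow_right hp.pos (by omega))
  · exact hpn.le.trans (Nat.le_self_pow (by omega) p)

theorem Function.Periodic.sum_range_mul {M : Type*} [AddCommMonoid M] {g : ℕ → M} {m : ℕ}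
    (hg : Function.Periodic g m) (k : ℕ) : ∑ i ∈ range (k * m), g i = k • ∑ i ∈ range m, g i := by
  induction k with
  | zero => simp
  | succ k ih =>
    rw [add_mul, one_mul, sum_range_add, ih, succ_nsmul]
    congr 1
    refine sum_congr rfl fun i _ => ?_
    simpa [add_comm] using hg.nat_mul k i

theorem Finset.sum_range_two_mul {M : Type*} [AddCommMonoid M] (g : ℕ → M) (n : ℕ) :
    ∑ i ∈ range (2 * n), g i = ∑ i ∈ range n, (g (2 * i) + g (2 * i + 1)) := by
  induction n with
  | zero => simp
  | succ n ih => rw [Nat.mul_succ, sum_range_succ, sum_range_succ, sum_range_succ, ih, add_assoc]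

theorem sum_Icc_one_eq_sum_range {M : Type*} [AddCommMonoid M] (g : ℕ → M) (n : ℕ) :
    ∑ i ∈ Icc 1 n, g i = ∑ i ∈ range n, g (i + 1) := by
  rw [range_eq_Ico, sum_Ico_add' g 0 n 1]
  rfl

section TwoPow

variable {R : Type*} [CommRing R] {f : ℕ → R}

theorem apply_two_pow_mul_of_odd (hfmul : ∀ m n, Nat.Coprime m n → f (m * n) = f m * f n)
    (h2 : ∀ k, 1 ≤ k → f (2 ^ k) = -1) {k n : ℕ} (hk : 1 ≤ k) (hn : Odd n) :
    f (2 ^ k * n) = -f n := by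
  rw [hfmul _ _ (Nat.Coprime.pow_left k (Nat.coprime_two_left.mpr hn)), h2 k hk, neg_one_mul]

theorem apply_two_mul_of_odd (hfmul : ∀ m n, Nat.Coprime m n → f (m * n) = f m * f n)
    (h2 : ∀ k, 1 ≤ k → f (2 ^ k) = -1) {n : ℕ} (hn : Odd n) : f (2 * n) = -f n := by
  simpa using apply_two_pow_mul_of_odd hfmul h2 le_rfl hn

theorem apply_two_mul_of_even (hfmul : ∀ m n, Nat.Coprime m n → f (m * n) = f m * f n)
    (h2 : ∀ k, 1 ≤ k → f (2 ^ k) = -1) {n : ℕ} (hn : Even n) (hn0 : n ≠ 0) :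
    f (2 * n) = f n := by
  obtain ⟨k, b, hb, rfl⟩ := Nat.exists_eq_two_pow_mul_odd hn0
  have hk : 1 ≤ k := by
    by_contra! hk
    simp_all [← Nat.not_odd_iff_even]
  rw [← mul_assoc, ← pow_succ', apply_two_pow_mul_of_odd hfmul h2 (by omega) hb,
    apply_two_pow_mul_of_odd hfmul h2 hk hb]

/-- Let `S = ∑_{n ≤ m} f n` and `O = ∑_{odd n ≤ m} f n`. In `∑_{n ≤ 2m} f n = 2S` the odd terms
give `2O` and the even terms give `∑_{n ≤ m} f (2n) = S - 2O`, so `2S = S`. -/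
theorem sum_Icc_eq_zero_of_two_mul (hodd : ∀ n, Odd n → f (2 * n) = -f n)
    (heven : ∀ n, Even n → n ≠ 0 → f (2 * n) = f n) {m : ℕ} (hm : Even m)
    (hper : ∀ n, 1 ≤ n → f (n + m) = f n) : ∑ n ∈ Icc 1 m, f n = 0 := by
  obtain ⟨y, rfl⟩ := hm
  rw [← two_mul] at hper ⊢
  set S := ∑ i ∈ range (2 * y), f (i + 1)
  set O := ∑ i ∈ range y, f (2 * i + 1)
  have hS : ∑ i ∈ range (2 * (2 * y)), f (i + 1) = 2 • S :=
    Function.Periodic.sum_range_mul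
      (fun i => by simpa [add_right_comm] using hper (i + 1) (by omega)) 2
  have hO : ∑ i ∈ range (2 * y), f (2 * i + 1) = 2 • O :=
    Function.Periodic.sum_range_mul (fun i => by
      simpa [mul_add, add_right_comm] using hper (2 * i + 1) (by omega)) 2
  have hsplit : ∑ i ∈ range (2 * (2 * y)), f (i + 1)
      = ∑ i ∈ range (2 * y), f (2 * i + 1) + ∑ i ∈ range (2 * y), f (2 * (i + 1)) := by
    rw [sum_range_two_mul, sum_add_distrib]
    rfl
  have heven_sum : ∑ i ∈ range (2 * y), f (2 * (i + 1)) = S - 2 * O := by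
    rw [sum_range_two_mul, show S = _ from sum_range_two_mul _ y]
    have hterm : ∀ i, f (2 * (2 * i + 1)) + f (2 * (2 * i + 1 + 1))
        = -f (2 * i + 1) + f (2 * i + 1 + 1) := fun i => by
      rw [hodd _ (odd_two_mul_add_one i), heven _ ⟨i + 1, by ring⟩ (by omega)]
    simp only [hterm, sum_add_distrib, sum_neg_distrib, O]
    ring
  rw [sum_Icc_one_eq_sum_range]
  rw [hsplit, hO, heven_sum] at hS
  simp only [two_smul] at hS
  linear_combination -hS

end TwoPow


theorem structure_implies_periodic_zero_mean_general
    (f : ℕ → ℂ) (hf1 : f 1 = 1)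
    (hfmul : ∀ m n, Nat.Coprime m n → f (m * n) = f m * f n)
    (h2 : ∀ k : ℕ, 1 ≤ k → f (2 ^ k) = -1)
    (hM : ∃ M : ℕ, ∀ p k : ℕ, p.Prime → 1 ≤ k → M ≤ p ^ k → f (p ^ k) = f (p ^ (k - 1))) :
    ∃ m : ℕ, 1 ≤ m ∧ (∀ n : ℕ, 1 ≤ n → f (n + m) = f n) ∧
      ∑ n ∈ Finset.Icc 1 m, f n = 0 := by
  obtain ⟨M, hM⟩ := hM
  set N := M + 2
  set m := N.factorial ^ N
  have hm0 : m ≠ 0 := pow_ne_zero _ N.factorial_ne_zero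
  have hpow : ∀ p, p.Prime → ∀ a, f (p ^ a) = f (p ^ min a (m.factorization p)) := fun p hp =>
    apply_pow_eq_apply_pow_min_of_stable hp.one_lt.le (hM p · hp)
      ((by omega : M ≤ N).trans (Nat.le_pow_factorization_factorial_pow_add_one N hp))
  have hper : ∀ n, 1 ≤ n → f (n + m) = f n := fun n hn =>
    apply_add_eq_of_forall_prime_pow hf1 hfmul hm0 (by omega) hpow
  have hm_even : Even m := even_iff_two_dvd.mpr <|
    (Nat.dvd_factorial two_pos (by omega)).trans (dvd_pow_self _ (by omega))
  exact ⟨m, Nat.one_le_iff_ne_zero.mpr hm0, hper,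
    sum_Icc_eq_zero_of_two_mul (fun _ hn => apply_two_mul_of_odd hfmul h2 hn)
      (fun _ hn hn0 => apply_two_mul_of_even hfmul h2 hn hn0) hm_even hper⟩

theorem structure_implies_periodic_zero_mean
    (f : ℕ → ℂ) (hf1 : f 1 = 1)
    (hfmul : ∀ m n, Nat.Coprime m n → f (m * n) = f m * f n)
    (hfb : ∀ n, ‖f n‖ ≤ 1)
    (h2 : ∀ k : ℕ, 1 ≤ k → f (2 ^ k) = -1)
    (hM : ∃ M : ℕ, ∀ p k : ℕ, p.Prime → 1 ≤ k → M ≤ p ^ k → f (p ^ k) = f (p ^ (k - 1))) :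
    ∃ m : ℕ, 1 ≤ m ∧ (∀ n : ℕ, 1 ≤ n → f (n + m) = f n) ∧
      ∑ n ∈ Finset.Icc 1 m, f n = 0 :=
  structure_implies_periodic_zero_mean_general f hf1 hfmul h2 hM
end

section
/- For every real number t and positive integer a, ({t/a} − {t/a}²) − 4({t/(2a)} − {t/(2a)}²) = −2‖t/(2a)‖, where {x} denotes the fractional part of x and ‖x‖ denotes the distance from x to the nearest integer. -/
/-!
With `y = t/(2a)` we have `t/a = 2y`, and
`{2y}` equals `2{y}` or `2{y} - 1` according as `{y} < 1/2` or not. In either case the identity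
becomes a polynomial identity in `{y}`.
-/

namespace Int

variable {R : Type*} [Field R] [LinearOrder R] [IsStrictOrderedRing R] [FloorRing R]

theorem fract_two_mul_of_fract_lt_half {y : R} (h : fract y < 1 / 2) :
    fract (2 * y) = 2 * fract y :=
  fract_eq_iff.mpr ⟨by linarith [fract_nonneg y], by linarith,
    2 * ⌊y⌋, by rw [← self_sub_floor y]; push_cast; ring⟩

theorem fract_two_mul_of_half_le_fract {y : R} (h : 1 / 2 ≤ fract y) :
    fract (2 * y) = 2 * fract y - 1 :=
  fract_eq_iff.mpr ⟨by linarith, by linarith [fract_lt_one y],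
    2 * ⌊y⌋ + 1, by rw [← self_sub_floor y]; push_cast; ring⟩

theorem fract_two_mul_sub_sq_sub_four_mul (y : R) :
    (fract (2 * y) - fract (2 * y) ^ 2) - 4 * (fract y - fract y ^ 2) =
      -2 * min (fract y) (1 - fract y) := by
  rcases lt_or_ge (fract y) (1 / 2) with h | h
  · rw [fract_two_mul_of_fract_lt_half h, min_eq_left (by linarith)]
    ring
  · rw [fract_two_mul_of_half_le_fract h, min_eq_right (by linarith)]
    ring

end Int

theorem fract_identity_dist_nearest_int_general (t : ℝ) (a : ℕ) :
    (Int.fract (t / a) - (Int.fract (t / a)) ^ 2) -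
      4 * (Int.fract (t / (2 * a)) - (Int.fract (t / (2 * a))) ^ 2) =
    -2 * min (Int.fract (t / (2 * a))) (1 - Int.fract (t / (2 * a))) := by
  have h : t / a = 2 * (t / (2 * a)) := by
    rw [mul_comm 2 (a : ℝ), ← div_div, mul_div_cancel₀ _ two_ne_zero]
  rw [h, Int.fract_two_mul_sub_sq_sub_four_mul]

theorem fract_identity_dist_nearest_int (t : ℝ) (a : ℕ) (ha : 0 < a) :
    (Int.fract (t / a) - (Int.fract (t / a)) ^ 2) -
      4 * (Int.fract (t / (2 * a)) - (Int.fract (t / (2 * a))) ^ 2) =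
    -2 * min (Int.fract (t / (2 * a))) (1 - Int.fract (t / (2 * a))) :=
  fract_identity_dist_nearest_int_general t a
end

section
/- Let f : ℕ → {−1,1} be multiplicative with f(3) = 1, D(1,f;∞) < ∞, and f(2^j) = −1 for all j ≥ 1; write f = 1 * g. Then for every odd positive integer a, G(a) ≤ 0, where G(a) = ∏_{p^k || a} ( g(p^k)² + 2 ∑_{i > k} g(p^k)g(p^i)/p^{i−k} ). In particular the only possibly-negative Euler factor E_p is E_2, and each factor with p ≥ 3 is nonnegative. -/
open Finset

/-!
Every `g(p^j)` with `j ≥ 1` lies in `{-2, 0, 2}`, so for `p ≥ 3` the tail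
`∑ g(p^(k+i+1)) / p^(i+1)` has absolute value at most `2/(p-1) ≤ 1`. For `k ≥ 1` the factor
is therefore `0` or at least `4 - 2·2·1 = 0`. For `k = 0` the bound `1 - 4/(p-1) ≥ 0` needs
`p ≥ 5`; at `p = 3` the hypothesis `f(3) = 1` gives `g(3) = 0`, and the remaining tail is at most
`1/3`. For odd `a` every prime in `G a` is at least `3`, so `G a` is a product of such factors.
-/

lemma hasSum_div_pow_succ (M : ℝ) {x : ℝ} (hx : 1 < x) :
    HasSum (fun i : ℕ => M / x ^ (i + 1)) (M / (x - 1)) := by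
  have hx0 : x ≠ 0 := (one_pos.trans hx).ne'
  have hx1 : x - 1 ≠ 0 := (sub_pos.2 hx).ne'
  have h := (hasSum_geometric_of_lt_one (inv_nonneg.2 (one_pos.trans hx).le)
    (inv_lt_one_of_one_lt₀ hx)).mul_left (M / x)
  have hsum : M / x * (1 - x⁻¹)⁻¹ = M / (x - 1) := by field_simp
  rw [hsum] at h
  refine h.congr_fun fun i => ?_
  rw [inv_pow, pow_succ]
  field_simp

section DivPowSucc

variable {c : ℕ → ℝ} {M x : ℝ}

lemma norm_div_pow_succ_le (hx : 0 < x) (hc : ∀ i, |c i| ≤ M) (i : ℕ) :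
    ‖c i / x ^ (i + 1)‖ ≤ M / x ^ (i + 1) := by
  rw [Real.norm_eq_abs, abs_div, abs_of_pos (pow_pos hx _)]
  exact div_le_div_of_nonneg_right (hc i) (pow_pos hx _).le

lemma summable_div_pow_succ (hx : 1 < x) (hc : ∀ i, |c i| ≤ M) :
    Summable (fun i => c i / x ^ (i + 1)) :=
  (hasSum_div_pow_succ M hx).summable.of_norm_bounded
    (norm_div_pow_succ_le (one_pos.trans hx) hc)

lemma abs_tsum_div_pow_succ_le (hx : 1 < x) (hc : ∀ i, |c i| ≤ M) :
    |∑' i, c i / x ^ (i + 1)| ≤ M / (x - 1) :=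
  tsum_of_norm_bounded (hasSum_div_pow_succ M hx) (norm_div_pow_succ_le (one_pos.trans hx) hc)

lemma sq_add_two_mul_tsum_nonneg (hx : 3 ≤ x) (hc : ∀ i, |c i| ≤ 2) {b : ℝ}
    (hb : b = 0 ∨ |b| = 2) : 0 ≤ b ^ 2 + 2 * ∑' i, b * c i / x ^ (i + 1) := by
  rcases hb with rfl | hb
  · simp
  simp_rw [mul_div_assoc, tsum_mul_left]
  have hS : |∑' i, c i / x ^ (i + 1)| ≤ 1 :=
    (abs_tsum_div_pow_succ_le (by linarith) hc).trans <| (div_le_one (by linarith)).2 (by linarith)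
  have hbS : |b * ∑' i, c i / x ^ (i + 1)| ≤ 2 := by
    rw [abs_mul, hb]; linarith
  have hb2 : b ^ 2 = 4 := by rw [← sq_abs, hb]; norm_num
  linarith [neg_le_of_abs_le hbS]

lemma one_add_two_mul_tsum_nonneg_of_five_le (hx : 5 ≤ x) (hc : ∀ i, |c i| ≤ 2) :
    0 ≤ 1 + 2 * ∑' i, c i / x ^ (i + 1) := by
  have hS := neg_le_of_abs_le (abs_tsum_div_pow_succ_le (x := x) (by linarith) hc)
  have : 2 / (x - 1) ≤ 1 / 2 := by
    rw [div_le_div_iff₀ (by linarith) (by norm_num)]; linarith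
  linarith

lemma one_add_two_mul_tsum_nonneg_of_head_eq_zero (hx : 3 ≤ x) (hc : ∀ i, |c i| ≤ 2)
    (h0 : c 0 = 0) : 0 ≤ 1 + 2 * ∑' i, c i / x ^ (i + 1) := by
  rw [(summable_div_pow_succ (by linarith) hc).tsum_eq_zero_add, h0, zero_div, zero_add]
  simp_rw [pow_succ x (_ + 1), ← div_div, tsum_div_const]
  have hS := neg_le_of_abs_le
    (abs_tsum_div_pow_succ_le (c := fun i => c (i + 1)) (x := x) (by linarith) (fun i => hc _))
  have : 2 / (x - 1) ≤ 1 := (div_le_one (by linarith)).2 (by linarith)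
  have hT : -(1 / 3) ≤ (∑' i, c (i + 1) / x ^ (i + 1)) / x := by
    rw [le_div_iff₀ (by linarith)]; linarith
  linarith

end DivPowSucc

lemma sub_eq_zero_or_abs_sub_eq_two {u v : ℝ} (hu : u = 1 ∨ u = -1) (hv : v = 1 ∨ v = -1) :
    u - v = 0 ∨ |u - v| = 2 := by
  rcases hu with rfl | rfl <;> rcases hv with rfl | rfl <;> norm_num

lemma abs_le_two_of_eq_zero_or_abs_eq_two {b : ℝ} (hb : b = 0 ∨ |b| = 2) : |b| ≤ 2 := by
  rcases hb with rfl | hb <;> simp [*]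

theorem euler_factors_nonneg_of_f_three_eq_one_general
    (f g G : ℕ → ℝ) (hf1 : f 1 = 1)
    (hrange : ∀ n : ℕ, 1 ≤ n → f n = 1 ∨ f n = -1)
    (hf3 : f 3 = 1)
    (hg : ∀ p k : ℕ, p.Prime → 1 ≤ k → g (p ^ k) = f (p ^ k) - f (p ^ (k - 1)))
    (hG : ∀ a : ℕ, G a = ∏ p ∈ a.primeFactors,
      (g (p ^ (a.factorization p)) ^ 2 +
        2 * ∑' i : ℕ, g (p ^ (a.factorization p)) *
          g (p ^ (a.factorization p + i + 1)) / (p : ℝ) ^ (i + 1))) :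
    (∀ p k : ℕ, p.Prime → 3 ≤ p →
      (k = 0 → 0 ≤ 1 + 2 * ∑' i : ℕ, g (p ^ (i + 1)) / (p : ℝ) ^ (i + 1)) ∧
      (1 ≤ k → 0 ≤ g (p ^ k) ^ 2 +
        2 * ∑' i : ℕ, g (p ^ k) * g (p ^ (k + i + 1)) / (p : ℝ) ^ (i + 1))) ∧
    (∀ a : ℕ, 1 ≤ a → Odd a → 0 ≤ G a) := by
  have hg_val : ∀ p k, p.Prime → 1 ≤ k → g (p ^ k) = 0 ∨ |g (p ^ k)| = 2 := fun p k hp hk => by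
    rw [hg p k hp hk]
    exact sub_eq_zero_or_abs_sub_eq_two (hrange _ (Nat.one_le_pow _ _ hp.pos))
      (hrange _ (Nat.one_le_pow _ _ hp.pos))
  have hg_le : ∀ p k i, p.Prime → |g (p ^ (k + i + 1))| ≤ 2 := fun p k i hp =>
    abs_le_two_of_eq_zero_or_abs_eq_two (hg_val p _ hp (by omega))
  have factor_nonneg : ∀ p k : ℕ, p.Prime → 3 ≤ p →
      (k = 0 → 0 ≤ 1 + 2 * ∑' i : ℕ, g (p ^ (i + 1)) / (p : ℝ) ^ (i + 1)) ∧
      (1 ≤ k → 0 ≤ g (p ^ k) ^ 2 +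
        2 * ∑' i : ℕ, g (p ^ k) * g (p ^ (k + i + 1)) / (p : ℝ) ^ (i + 1)) := by
    intro p k hp hp3
    have hp3' : (3 : ℝ) ≤ p := by exact_mod_cast hp3
    refine ⟨fun _ => ?_, fun hk => sq_add_two_mul_tsum_nonneg hp3' (fun i => hg_le p k i hp)
      (hg_val p k hp hk)⟩
    have hc : ∀ i, |g (p ^ (i + 1))| ≤ 2 := fun i => by simpa using hg_le p 0 i hp
    by_cases h3 : p = 3
    · subst h3
      have hg3 : g (3 ^ (0 + 1)) = 0 := by rw [zero_add, hg 3 1 hp le_rfl]; norm_num [hf1, hf3]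
      exact one_add_two_mul_tsum_nonneg_of_head_eq_zero hp3' hc hg3
    · have hp5 : (5 : ℝ) ≤ p := by exact_mod_cast hp.five_le_of_ne_two_of_ne_three (by omega) h3
      exact one_add_two_mul_tsum_nonneg_of_five_le hp5 hc
  refine ⟨factor_nonneg, fun a _ hodd => ?_⟩
  rw [hG]
  refine prod_nonneg fun p hpa => (factor_nonneg p _ (Nat.prime_of_mem_primeFactors hpa) ?_).2 ?_
  · have := (Nat.prime_of_mem_primeFactors hpa).two_le
    have := hodd.ne_two_of_dvd_nat (Nat.dvd_of_mem_primeFactors hpa)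
    omega
  · rw [← Nat.support_factorization] at hpa
    exact Nat.one_le_iff_ne_zero.2 (Finsupp.mem_support_iff.1 hpa)

theorem euler_factors_nonneg_of_f_three_eq_one
    (f g G : ℕ → ℝ) (hf1 : f 1 = 1)
    (hfmul : ∀ a b : ℕ, Nat.Coprime a b → f (a * b) = f a * f b)
    (hrange : ∀ n : ℕ, 1 ≤ n → f n = 1 ∨ f n = -1)
    (hf3 : f 3 = 1)
    (h2 : ∀ j : ℕ, 1 ≤ j → f (2 ^ j) = -1)
    (hpret : Summable (fun p : Nat.Primes => (1 - f p) / (p : ℝ)))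
    (hg : ∀ p k : ℕ, p.Prime → 1 ≤ k → g (p ^ k) = f (p ^ k) - f (p ^ (k - 1)))
    (hG : ∀ a : ℕ, G a = ∏ p ∈ a.primeFactors,
      (g (p ^ (a.factorization p)) ^ 2 +
        2 * ∑' i : ℕ, g (p ^ (a.factorization p)) *
          g (p ^ (a.factorization p + i + 1)) / (p : ℝ) ^ (i + 1))) :
    (∀ p k : ℕ, p.Prime → 3 ≤ p →
      (k = 0 → 0 ≤ 1 + 2 * ∑' i : ℕ, g (p ^ (i + 1)) / (p : ℝ) ^ (i + 1)) ∧
      (1 ≤ k → 0 ≤ g (p ^ k) ^ 2 +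
        2 * ∑' i : ℕ, g (p ^ k) * g (p ^ (k + i + 1)) / (p : ℝ) ^ (i + 1))) ∧
    (∀ a : ℕ, 1 ≤ a → Odd a → 0 ≤ G a) :=
  euler_factors_nonneg_of_f_three_eq_one_general f g G hf1 hrange hf3 hg hG
end

section
/- Let g be a function on prime powers with |g(p^k)| ≤ 2, g(p^k) ∈ {−2,0,2} for k ≥ 1, and g(p^k) g(p^{k+1}) ≤ 0 for all k ≥ 0. Then for any prime p ≥ 3 and k ≥ 1 with g(p^k) ≠ 0, the Euler factor E_p(p^k) = g(p^k)² + 2 ∑_{i ≥ k+1} g(p^k)g(p^i)/p^{i−k} satisfies E_p(p^k) ≥ 4 − 8p/(p² − 1) ≥ 1. -/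
/-!
Write `c = g(p^k) = ±2` and `b_i = c · g(p^{k+i+1})`, so that `|b_i| ≤ 4` and consecutive `b_i` have
product `≤ 0`. Grouping the series `∑ b_i p^{-(i+1)}` in consecutive pairs, each pair
`p^{-(2j+1)} (b_{2j} + b_{2j+1}/p)` is at least `-4 p^{-(2j+1)}`: a negative `b_{2j}` forces
`b_{2j+1} ≥ 0`, and otherwise only the damped second term can be negative. Summing the geometric
series gives `∑ ≥ -4p/(p² - 1)`, and `4 - 8p/(p² - 1) ≥ 1` is `(3p + 1)(p - 3) ≥ 0`.
-/

lemma neg_le_add_mul_of_mul_nonpos {a b x M : ℝ} (ha : -M ≤ a) (hb : -M ≤ b) (hab : a * b ≤ 0)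
    (hx0 : 0 ≤ x) (hx1 : x ≤ 1) : -M ≤ a + b * x := by
  rcases le_or_gt 0 a with ha0 | ha0
  · have hM : 0 ≤ M := by nlinarith
    nlinarith
  · have hb0 : 0 ≤ b := by nlinarith
    nlinarith

lemma le_tsum_mul_pow_succ_of_mul_succ_nonpos {b : ℕ → ℝ} {M x : ℝ} (hbM : ∀ i, |b i| ≤ M)
    (halt : ∀ i, b i * b (i + 1) ≤ 0) (hx0 : 0 ≤ x) (hx1 : x < 1) :
    -M * x / (1 - x ^ 2) ≤ ∑' i, b i * x ^ (i + 1) := by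
  set f : ℕ → ℝ := fun i => b i * x ^ (i + 1)
  have hf : Summable f := by
    refine Summable.of_norm_bounded
      ((summable_geometric_of_lt_one hx0 hx1).mul_left (M * x)) fun i => ?_
    rw [Real.norm_eq_abs, abs_mul, abs_of_nonneg (pow_nonneg hx0 _)]
    calc _ ≤ M * x ^ (i + 1) := mul_le_mul_of_nonneg_right (hbM i) (pow_nonneg hx0 _)
      _ = M * x * x ^ i := by ring
  have hfe : Summable fun j => f (2 * j) := hf.comp_injective (mul_right_injective₀ two_ne_zero)
  have hfo : Summable fun j => f (2 * j + 1) :=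
    hf.comp_injective ((add_left_injective 1).comp (mul_right_injective₀ two_ne_zero))
  have hx2 : 0 ≤ x ^ 2 := sq_nonneg x
  have hgeom : HasSum (fun j : ℕ => -M * x * (x ^ 2) ^ j) (-M * x / (1 - x ^ 2)) := by
    simpa only [div_eq_mul_inv] using
      (hasSum_geometric_of_lt_one hx2 (by nlinarith)).mul_left (-M * x)
  have hpair : ∀ j : ℕ, -M * x * (x ^ 2) ^ j ≤ f (2 * j) + f (2 * j + 1) := by
    intro j
    have hpos : 0 ≤ x ^ (2 * j + 1) := pow_nonneg hx0 _
    have hlow := neg_le_add_mul_of_mul_nonpos (neg_le_of_abs_le (hbM (2 * j)))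
      (neg_le_of_abs_le (hbM (2 * j + 1))) (halt (2 * j)) hx0 hx1.le
    calc -M * x * (x ^ 2) ^ j = x ^ (2 * j + 1) * -M := by ring
      _ ≤ x ^ (2 * j + 1) * (b (2 * j) + b (2 * j + 1) * x) := mul_le_mul_of_nonneg_left hlow hpos
      _ = f (2 * j) + f (2 * j + 1) := by simp only [f]; ring
  calc -M * x / (1 - x ^ 2) ≤ ∑' j, (f (2 * j) + f (2 * j + 1)) :=
        hasSum_le hpair hgeom (hfe.add hfo).hasSum
    _ = ∑' i, f i := by rw [hfe.tsum_add hfo, tsum_even_add_odd hfe hfo]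

lemma le_tsum_div_pow_succ_of_mul_succ_nonpos {b : ℕ → ℝ} {M r : ℝ} (hbM : ∀ i, |b i| ≤ M)
    (halt : ∀ i, b i * b (i + 1) ≤ 0) (hr : 1 < r) :
    -M * r / (r ^ 2 - 1) ≤ ∑' i, b i / r ^ (i + 1) := by
  have hr2 : r ^ 2 - 1 ≠ 0 := by nlinarith
  convert le_tsum_mul_pow_succ_of_mul_succ_nonpos hbM halt (inv_nonneg.mpr (by linarith))
    (inv_lt_one_of_one_lt₀ hr) using 1
  · field_simp
  · simp only [inv_pow, div_eq_mul_inv]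

lemma one_le_four_sub_eight_mul_div {r : ℝ} (hr : 3 ≤ r) : 1 ≤ 4 - 8 * r / (r ^ 2 - 1) := by
  rw [le_sub_comm, div_le_iff₀ (by nlinarith)]
  nlinarith

theorem euler_factor_lower_bound_general
    (g : ℕ → ℝ) (p : ℕ) (hp3 : 3 ≤ p)
    (hval : ∀ k : ℕ, 1 ≤ k → g (p ^ k) = -2 ∨ g (p ^ k) = 0 ∨ g (p ^ k) = 2)
    (halt : ∀ k : ℕ, g (p ^ k) * g (p ^ (k + 1)) ≤ 0)
    (k : ℕ) (hk : 1 ≤ k) (hne : g (p ^ k) ≠ 0) :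
    4 - 8 * (p : ℝ) / ((p : ℝ) ^ 2 - 1) ≤
      g (p ^ k) ^ 2 +
        2 * ∑' i : ℕ, g (p ^ k) * g (p ^ (k + i + 1)) / (p : ℝ) ^ (i + 1) ∧
    (1 : ℝ) ≤ 4 - 8 * (p : ℝ) / ((p : ℝ) ^ 2 - 1) := by
  have hc : g (p ^ k) = -2 ∨ g (p ^ k) = 2 := by
    rcases hval k hk with h | h | h
    exacts [.inl h, absurd h hne, .inr h]
  have hbound : ∀ i, |g (p ^ k) * g (p ^ (k + i + 1))| ≤ 4 := fun i => by
    rcases hval (k + i + 1) (by omega) with h | h | h <;> rcases hc with hc | hc <;>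
      norm_num [h, hc]
  have hsign : ∀ i, g (p ^ k) * g (p ^ (k + i + 1)) *
      (g (p ^ k) * g (p ^ (k + (i + 1) + 1))) ≤ 0 := fun i =>
    calc _ = g (p ^ k) ^ 2 * (g (p ^ (k + i + 1)) * g (p ^ (k + i + 1 + 1))) := by ring_nf
      _ ≤ 0 := mul_nonpos_of_nonneg_of_nonpos (sq_nonneg _) (halt _)
  have hr : (3 : ℝ) ≤ p := by exact_mod_cast hp3
  have hseries := le_tsum_div_pow_succ_of_mul_succ_nonpos hbound hsign (by linarith)
  have hsq : g (p ^ k) ^ 2 = 4 := by rcases hc with h | h <;> norm_num [h]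
  refine ⟨?_, one_le_four_sub_eight_mul_div hr⟩
  rw [hsq]
  linarith [show 8 * (p : ℝ) / ((p : ℝ) ^ 2 - 1) = -2 * (-4 * p / ((p : ℝ) ^ 2 - 1)) by ring]

theorem euler_factor_lower_bound
    (g : ℕ → ℝ) (p : ℕ) (hp : p.Prime) (hp3 : 3 ≤ p)
    (hb : ∀ k : ℕ, |g (p ^ k)| ≤ 2)
    (hval : ∀ k : ℕ, 1 ≤ k → g (p ^ k) = -2 ∨ g (p ^ k) = 0 ∨ g (p ^ k) = 2)
    (halt : ∀ k : ℕ, g (p ^ k) * g (p ^ (k + 1)) ≤ 0)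
    (k : ℕ) (hk : 1 ≤ k) (hne : g (p ^ k) ≠ 0) :
    4 - 8 * (p : ℝ) / ((p : ℝ) ^ 2 - 1) ≤
      g (p ^ k) ^ 2 +
        2 * ∑' i : ℕ, g (p ^ k) * g (p ^ (k + i + 1)) / (p : ℝ) ^ (i + 1) ∧
    (1 : ℝ) ≤ 4 - 8 * (p : ℝ) / ((p : ℝ) ^ 2 - 1) :=
  euler_factor_lower_bound_general g p hp3 hval halt k hk hne
end

section
/- Let χ be a primitive Dirichlet character modulo p^k (p prime, k ≥ 1) and let b be an integer with p^i || b where i ≤ k − 2. Then ∑_{a mod p^k} χ(a) · conj(χ(a + b)) = 0. -/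
open Finset IsLocalRing
open scoped ComplexConjugate

/-!
Write `β` for `b` in `ZMod (p ^ k)`. Terms with `a` a nonunit vanish, and for a unit `a` one has
`χ a * conj (χ (a + β)) = conj (χ (1 + β a⁻¹))`, so the sum is the conjugate of `∑ χ (1 + β u)`
over the units `u`. Since `p^i ∥ b`, `β = p^i v` with `v` a unit; primitivity gives `s` with
`χ (1 + p^(k-1) s) ≠ 1`, and `p^(k-1) s = β t` with `t = v⁻¹ p^(k-1-i) s` divisible by `p`
because `i ≤ k - 2`. Then `w = 1 + β t` is a unit, the affine map `a ↦ w a + t` permutes the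
units of the local ring `ZMod (p ^ k)`, and `1 + β (w a + t) = w (1 + β a)`; so this substitution
multiplies the unit sum by `χ w ≠ 1`, and the sum vanishes.
-/

lemma ZMod.sum_range_natCast {M : Type*} [AddCommMonoid M] (n : ℕ) [NeZero n] (f : ZMod n → M) :
    ∑ a ∈ range n, f a = ∑ a : ZMod n, f a :=
  sum_nbij' (↑) ZMod.val (by simp) (by simp [ZMod.val_lt])
    (fun _ ha => ZMod.val_natCast_of_lt (mem_range.1 ha)) (fun a _ => ZMod.natCast_zmod_val a)
    fun _ _ => rfl

lemma ZMod.isLocalRing_prime_pow {p k : ℕ} (hp : p.Prime) (hk : k ≠ 0) :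
    IsLocalRing (ZMod (p ^ k)) := by
  have : Fact p.Prime := ⟨hp⟩
  have : Nontrivial (ZMod (p ^ k)) := ZMod.nontrivial_iff.2 (Nat.one_lt_pow hk hp.one_lt).ne'
  exact .of_surjective' (PadicInt.toZModPow k) (ZMod.ringHom_surjective _)

lemma ZMod.natCast_dvd_of_cast_eq_zero {n d : ℕ} [NeZero n] {x : ZMod n}
    (hx : (ZMod.cast x : ZMod d) = 0) : (d : ZMod n) ∣ x := by
  rw [ZMod.cast_eq_val, ZMod.natCast_eq_zero_iff] at hx
  obtain ⟨m, hm⟩ := hx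
  exact ⟨m, by rw [← ZMod.natCast_zmod_val x, hm, Nat.cast_mul]⟩

lemma Fintype.sum_units_eq_sum {R M : Type*} [Monoid R] [Fintype R] [DecidableEq R]
    [AddCommMonoid M] (f : R → M) (hf : ∀ a, ¬ IsUnit a → f a = 0) :
    ∑ u : Rˣ, f u = ∑ a, f a :=
  Fintype.sum_of_injective _ Units.val_injective _ _
    (fun a ha => hf a fun hu => ha ⟨hu.unit, rfl⟩) fun _ => rfl

namespace MulChar

variable {R : Type*} [CommRing R] [Fintype R] [DecidableEq R]

theorem sum_mul_conj_add_eq_conj_sum_units (χ : MulChar R ℂ) (β : R) :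
    ∑ a, χ a * conj (χ (a + β)) = conj (∑ u : Rˣ, χ (1 + β * u)) := by
  have hunit (u : Rˣ) : χ u * conj (χ (u + β)) = conj (χ (1 + β * ↑u⁻¹)) := by
    have hsplit : (u + β : R) = u * (1 + β * ↑u⁻¹) := by
      rw [mul_add, mul_one, mul_left_comm, Units.mul_inv, mul_one]
    rw [hsplit, map_mul, map_mul, ← mul_assoc, starRingEnd_apply, star_apply' χ, ← mul_apply,
      mul_inv_cancel, one_apply_coe, one_mul]
  calc ∑ a, χ a * conj (χ (a + β))
      = ∑ u : Rˣ, χ u * conj (χ (u + β)) :=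
        (Fintype.sum_units_eq_sum _ fun a ha => by rw [χ.map_nonunit ha, zero_mul]).symm
    _ = ∑ u : Rˣ, conj (χ (1 + β * ↑u⁻¹)) := sum_congr rfl fun u _ => hunit u
    _ = ∑ u : Rˣ, conj (χ (1 + β * u)) :=
        Equiv.sum_comp (Equiv.inv Rˣ) fun u : Rˣ => conj (χ (1 + β * u))
    _ = conj (∑ u : Rˣ, χ (1 + β * u)) := (map_sum _ _ _).symm

theorem sum_units_one_add_mul_eq_zero [IsLocalRing R] {R' : Type*} [CommRing R'] [IsDomain R']
    (χ : MulChar R R') {x t : R} (ht : t ∈ maximalIdeal R) (hχ : χ (1 + x * t) ≠ 1) :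
    ∑ u : Rˣ, χ (1 + x * u) = 0 := by
  set w := 1 + x * t with hw_def
  have hw : IsUnit w := by
    simpa using isUnit_one_sub_self_of_mem_nonunits (-(x * t))
      ((mem_maximalIdeal _).1 (neg_mem (Ideal.mul_mem_left _ x ht)))
  have hunit (a : R) : IsUnit (w * a + t) ↔ IsUnit a := by
    rw [← notMem_maximalIdeal, ← notMem_maximalIdeal, Ideal.add_mem_iff_left _ ht,
      Ideal.unit_mul_mem_iff_mem _ hw]
  let g : R → R' := fun a => if IsUnit a then χ (1 + x * a) else 0
  have hg (a : R) : g (w * a + t) = χ w * g a := by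
    simp only [g, hunit]
    split_ifs
    · rw [← map_mul]; congr 1; rw [hw_def]; ring
    · rw [mul_zero]
  have hsum : ∑ u : Rˣ, χ (1 + x * u) = ∑ a, g a := by
    rw [← Fintype.sum_units_eq_sum g fun a ha => if_neg ha]
    exact sum_congr rfl fun u _ => (if_pos u.isUnit).symm
  rw [hsum]
  refine eq_zero_of_mul_eq_self_left hχ ?_
  rw [mul_sum, ← (hw.unit.mulLeft.trans (Equiv.addRight t)).sum_comp g]
  exact sum_congr rfl fun a _ => (hg a).symm

end MulChar

namespace DirichletCharacter

variable {R' : Type*} [CommMonoidWithZero R'] {n : ℕ} [NeZero n] {χ : DirichletCharacter R' n}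

theorem factorsThrough_of_apply_one_add_mul_eq_one {d : ℕ} (hd : d ∣ n)
    (h : ∀ s : ZMod n, χ (1 + d * s) = 1) : χ.FactorsThrough d := by
  rw [factorsThrough_iff_ker_unitsMap hd]
  intro u hu
  have hcast : (ZMod.cast ((u : ZMod n) - 1) : ZMod d) = 0 := by
    rw [ZMod.cast_sub hd, ← ZMod.unitsMap_val hd, MonoidHom.mem_ker.1 hu, Units.val_one,
      ZMod.cast_one hd, sub_self]
  obtain ⟨s, hs⟩ := ZMod.natCast_dvd_of_cast_eq_zero hcast
  rw [MonoidHom.mem_ker, Units.ext_iff, MulChar.coe_toUnitHom, eq_add_of_sub_eq' hs, Units.val_one]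
  exact h s

theorem IsPrimitive.exists_apply_one_add_mul_ne_one (hχ : χ.IsPrimitive) {d : ℕ} (hd : d ∣ n)
    (hdn : d ≠ n) : ∃ s : ZMod n, χ (1 + d * s) ≠ 1 := by
  by_contra! h
  have hle : χ.conductor ≤ d :=
    Nat.sInf_le ((mem_conductorSet_iff _).2 (factorsThrough_of_apply_one_add_mul_eq_one hd h))
  exact hdn (le_antisymm (Nat.le_of_dvd (Nat.pos_of_neZero n) hd) (hχ ▸ hle))

end DirichletCharacter

theorem primitive_character_shifted_sum_eq_zero_general
    (p k : ℕ) (hp : p.Prime)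
    (χ : DirichletCharacter ℂ (p ^ k)) (hχ : χ.IsPrimitive)
    (b : ℤ) (i : ℕ) (hik : i + 2 ≤ k)
    (hdvd : (p : ℤ) ^ i ∣ b) (hndvd : ¬ (p : ℤ) ^ (i + 1) ∣ b) :
    ∑ a ∈ Finset.range (p ^ k),
      χ (a : ZMod (p ^ k)) *
        (starRingEnd ℂ) (χ ((a : ZMod (p ^ k)) + (b : ZMod (p ^ k)))) = 0 := by
  have : Fact p.Prime := ⟨hp⟩
  have : NeZero (p ^ k) := ⟨pow_ne_zero k hp.ne_zero⟩
  have : IsLocalRing (ZMod (p ^ k)) := ZMod.isLocalRing_prime_pow hp (by omega)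
  obtain ⟨b', rfl⟩ := hdvd
  have hb' : IsUnit (b' : ZMod (p ^ k)) := by
    refine IsUnit.of_map (ZMod.castHom (dvd_pow_self p (by omega)) (ZMod p)) _ ?_
    rw [map_intCast, isUnit_iff_ne_zero, Ne, ZMod.intCast_zmod_eq_zero_iff_dvd]
    exact fun h => hndvd (by rw [pow_succ]; exact mul_dvd_mul_left _ h)
  have hp_mem : (p : ZMod (p ^ k)) ∈ maximalIdeal _ :=
    (mem_maximalIdeal _).2 (ZMod.prime_natCast_not_isUnit_pow hp (by omega))
  obtain ⟨s, hs⟩ := hχ.exists_apply_one_add_mul_ne_one (pow_dvd_pow p (k.sub_le 1))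
    ((Nat.pow_right_injective hp.two_le).ne (by omega))
  rw [ZMod.sum_range_natCast (p ^ k) fun a => χ a * conj (χ (a + _)),
    MulChar.sum_mul_conj_add_eq_conj_sum_units, map_eq_zero]
  refine MulChar.sum_units_one_add_mul_eq_zero χ
    (t := ↑hb'.unit⁻¹ * (p : ZMod (p ^ k)) ^ (k - 1 - i) * s)
    (Ideal.mul_mem_right _ _ (Ideal.mul_mem_left _ _ (Ideal.pow_mem_of_mem _ hp_mem _ (by omega))))
    ?_
  have hpow : (p : ZMod (p ^ k)) ^ (k - 1) = p ^ i * p ^ (k - 1 - i) := by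
    rw [← pow_add]; congr 1; omega
  convert hs using 3
  push_cast
  linear_combination (p ^ i * p ^ (k - 1 - i) * s : ZMod (p ^ k)) * hb'.mul_val_inv - s * hpow

theorem primitive_character_shifted_sum_eq_zero
    (p k : ℕ) (hp : p.Prime) (hk : 1 ≤ k)
    (χ : DirichletCharacter ℂ (p ^ k)) (hχ : χ.IsPrimitive)
    (b : ℤ) (i : ℕ) (hik : i + 2 ≤ k)
    (hdvd : (p : ℤ) ^ i ∣ b) (hndvd : ¬ (p : ℤ) ^ (i + 1) ∣ b) :
    ∑ a ∈ Finset.range (p ^ k),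
      χ (a : ZMod (p ^ k)) *
        (starRingEnd ℂ) (χ ((a : ZMod (p ^ k)) + (b : ZMod (p ^ k)))) = 0 :=
  primitive_character_shifted_sum_eq_zero_general p k hp χ hχ b i hik hdvd hndvd
end

section
/- Let χ be a primitive Dirichlet character of conductor q and b an integer. Then ∑_{a mod q} χ(a) conj(χ(a+b)) = ∏_{p^k || q, p^i || b, i ≤ k−1} μ(p^{k−i}) p^i · ∏_{p^k || q, p^k | b} φ(p^k). In particular, the sum vanishes unless q divides b·∏_{p | q} p. -/
/-!
For primitive `χ` the twisted Gauss sums satisfy `τ(χ, e(a·/q)) = χ̄(a) τ(χ)`, and `τ(χ) ≠ 0`.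
Multiplying the shifted sum by `τ(χ)` and expanding `χ̄(a + b) τ(χ)` in this way, the sum over `a`
becomes another Gauss sum, and everything collapses to the Ramanujan sum
`c_q(b) = ∑_{t ∈ (ℤ/q)ˣ} e(bt/q)`. Möbius inversion over `gcd(t, q)` gives
`c_q(b) = ∑_{d ∣ q} μ(d) (q/d) [q/d ∣ b]`, a multiplicative function of `q` whose value at `p^k` is
`p^k [p^k ∣ b] - p^(k-1) [p^(k-1) ∣ b]`; the product formula and the divisibility criterion are
read off from these local factors.
-/

open Finset
open scoped ArithmeticFunction.Moebius

namespace ZMod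

variable {q : ℕ} [NeZero q] {M : Type*} [AddCommMonoid M]

lemma sum_range_natCast_s16 (f : ZMod q → M) : ∑ a ∈ range q, f a = ∑ x, f x :=
  sum_nbij' (fun a ↦ (a : ZMod q)) val (fun _ _ ↦ mem_univ _)
    (fun x _ ↦ mem_range.mpr x.val_lt) (fun _ ha ↦ val_cast_of_lt (mem_range.mp ha))
    (fun x _ ↦ natCast_zmod_val x) (fun _ _ ↦ rfl)

lemma sum_filter_dvd_val {d m : ℕ} (hdm : d * m = q) (f : ZMod q → M) :
    ∑ t with d ∣ t.val, f t = ∑ j ∈ range m, f (d * j : ℕ) := by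
  have hd : 0 < d := Nat.pos_of_ne_zero (left_ne_zero_of_mul (hdm ▸ NeZero.ne q))
  have val_mul {j : ℕ} (hj : j ∈ range m) : ((d * j : ℕ) : ZMod q).val = d * j :=
    val_cast_of_lt (hdm ▸ Nat.mul_lt_mul_of_pos_left (mem_range.mp hj) hd)
  refine sum_nbij' (fun t ↦ t.val / d) (fun j ↦ (d * j : ℕ)) ?_ ?_ ?_ ?_ ?_
  · intro t _
    exact mem_range.mpr (Nat.div_lt_of_lt_mul (hdm ▸ t.val_lt))
  · intro j hj
    simp only [mem_filter, mem_univ, true_and, val_mul hj, dvd_mul_right]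
  · intro t ht
    rw [Nat.mul_div_cancel' (mem_filter.mp ht).2, natCast_zmod_val]
  · intro j hj
    rw [val_mul hj, Nat.mul_div_cancel_left _ hd]
  · intro t ht
    rw [Nat.mul_div_cancel' (mem_filter.mp ht).2, natCast_zmod_val]

lemma sum_stdAddChar_mul (c : ZMod q) :
    ∑ x, stdAddChar (x * c) = if c = 0 then (q : ℂ) else 0 := by
  simpa using AddChar.sum_mulShift c (isPrimitive_stdAddChar q)

lemma stdAddChar_intCast_mul_of_mul_eq {d m : ℕ} [NeZero m] (hdm : d * m = q) (x : ℤ) :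
    stdAddChar ((d * x : ℤ) : ZMod q) = stdAddChar (x : ZMod m) := by
  have hd : (d : ℂ) ≠ 0 := Nat.cast_ne_zero.mpr (left_ne_zero_of_mul (hdm ▸ NeZero.ne q))
  rw [stdAddChar_coe, stdAddChar_coe, ← hdm]
  congr 1
  push_cast
  field_simp

lemma sum_filter_dvd_val_stdAddChar_intCast_mul (b : ℤ) {d m : ℕ} (hdm : d * m = q) :
    ∑ t : ZMod q with d ∣ t.val, stdAddChar ((b : ZMod q) * t) =
      if (m : ℤ) ∣ b then (m : ℂ) else 0 := by
  have : NeZero m := ⟨right_ne_zero_of_mul (hdm ▸ NeZero.ne q)⟩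
  calc ∑ t : ZMod q with d ∣ t.val, stdAddChar ((b : ZMod q) * t)
      = ∑ j ∈ range m, stdAddChar ((d * (j * b) : ℤ) : ZMod q) := by
        rw [sum_filter_dvd_val hdm]
        push_cast
        ring_nf
    _ = ∑ j : ZMod m, stdAddChar (j * (b : ZMod m)) := by
        simp_rw [stdAddChar_intCast_mul_of_mul_eq hdm, ← sum_range_natCast_s16]
        push_cast
        rfl
    _ = _ := by simp_rw [sum_stdAddChar_mul, intCast_zmod_eq_zero_iff_dvd]

end ZMod

section GaussSum

variable {N : ℕ} [NeZero N] {R : Type*} [CommRing R] [IsDomain R]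
  {χ : DirichletCharacter R N} {e : AddChar (ZMod N) R}

lemma gaussSum_ne_zero_of_isPrimitive [CharZero R] (hχ : χ.IsPrimitive) (he : e.IsPrimitive) :
    gaussSum χ e ≠ 0 := by
  -- `∑_y τ(χ, e(y·)) e(-y) = N χ(1)`, while primitivity makes every `τ(χ, e(y·))` a multiple of
  -- `τ(χ, e)`.
  have key : ∑ y, gaussSum χ (e.mulShift y) * e (-y) = N :=
    calc ∑ y, gaussSum χ (e.mulShift y) * e (-y)
        = ∑ x, χ x * ∑ y, e (y * (x - 1)) := by
          simp_rw [gaussSum, sum_mul, mul_sum, mul_assoc, AddChar.mulShift_apply,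
            ← AddChar.map_add_eq_mul]
          rw [sum_comm]
          ring_nf
      _ = N := by
          simp_rw [AddChar.sum_mulShift _ he, sub_eq_zero, ZMod.card]
          simp
  intro h
  simp [gaussSum_mulShift_of_isPrimitive e hχ, h, eq_comm] at key
  exact NeZero.ne N key

lemma sum_mul_inv_apply_add_eq_sum_isUnit (hχ : χ.IsPrimitive) (hτ : gaussSum χ e ≠ 0)
    (c : ZMod N) :
    ∑ x, χ x * χ⁻¹ (x + c) = ∑ t with IsUnit t, e (c * t) := by
  have inv_mul_gaussSum (x : ZMod N) : χ⁻¹ x * gaussSum χ e = ∑ t, χ t * e (x * t) :=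
    (gaussSum_mulShift_of_isPrimitive e hχ x).symm
  have mul_inv_eq_ite (t : ZMod N) : χ t * χ⁻¹ t = if IsUnit t then 1 else 0 := by
    split_ifs with ht
    · rw [← MulChar.mul_apply, mul_inv_cancel, MulChar.one_apply ht]
    · rw [MulChar.map_nonunit χ ht, zero_mul]
  apply mul_right_cancel₀ hτ
  calc (∑ x, χ x * χ⁻¹ (x + c)) * gaussSum χ e
      = ∑ t, χ t * e (c * t) * ∑ x, χ x * e (t * x) := by
        simp_rw [sum_mul, mul_assoc, inv_mul_gaussSum, mul_sum]
        rw [sum_comm]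
        refine sum_congr rfl fun t _ ↦ sum_congr rfl fun x _ ↦ ?_
        rw [add_mul, AddChar.map_add_eq_mul]
        ring_nf
    _ = (∑ t with IsUnit t, e (c * t)) * gaussSum χ e := by
        simp_rw [← inv_mul_gaussSum, sum_filter, sum_mul]
        refine sum_congr rfl fun t _ ↦ ?_
        rw [show χ t * e (c * t) * (χ⁻¹ t * gaussSum χ e)
          = χ t * χ⁻¹ t * e (c * t) * gaussSum χ e by ring, mul_inv_eq_ite]
        split_ifs <;> simp

end GaussSum

lemma Int.natCast_pow_dvd_iff_le_factorization {p : ℕ} (hp : p.Prime) {b : ℤ} (hb : b ≠ 0)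
    (i : ℕ) : (p : ℤ) ^ i ∣ b ↔ i ≤ b.natAbs.factorization p := by
  rw [← Nat.cast_pow, Int.natCast_dvd, hp.pow_dvd_iff_le_factorization (Int.natAbs_ne_zero.mpr hb)]

namespace ArithmeticFunction

lemma sum_moebius_divisors_filter_dvd {a n : ℕ} (hn : n ≠ 0) :
    ∑ d ∈ n.divisors with d ∣ a, μ d = if a.Coprime n then 1 else 0 := by
  have : {d ∈ n.divisors | d ∣ a} = (a.gcd n).divisors := by
    ext d
    simp only [mem_filter, Nat.mem_divisors, Nat.dvd_gcd_iff, ne_eq, Nat.gcd_eq_zero_iff, hn,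
      and_false, not_false_eq_true, and_true]
    tauto
  rw [this, ← coe_mul_zeta_apply, moebius_mul_coe_zeta, one_apply]

lemma coe_moebius_mul_apply_prime_pow_succ {R : Type*} [CommRing R] (f : ArithmeticFunction R)
    {p : ℕ} (hp : p.Prime) (k : ℕ) :
    ((μ : ArithmeticFunction R) * f) (p ^ (k + 1)) = f (p ^ (k + 1)) - f (p ^ k) := by
  rw [mul_apply, Nat.sum_divisorsAntidiagonal (fun d e ↦ (μ : ArithmeticFunction R) d * f e),
    Nat.sum_divisors_prime_pow hp, sum_range_succ', sum_range_succ', sum_eq_zero]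
  · simp [pow_succ, hp.pos, moebius_apply_prime hp, sub_eq_neg_add]
  · intro i _
    simp [intCoe_apply, moebius_apply_prime_pow hp]

def idOnDivisors (b : ℤ) : ArithmeticFunction ℤ :=
  ⟨fun n ↦ if (n : ℤ) ∣ b then n else 0, by simp⟩

lemma idOnDivisors_apply (b : ℤ) (n : ℕ) :
    idOnDivisors b n = if (n : ℤ) ∣ b then (n : ℤ) else 0 := rfl

lemma isMultiplicative_idOnDivisors (b : ℤ) : (idOnDivisors b).IsMultiplicative := by
  refine ⟨by simp [idOnDivisors_apply], fun {m n} hmn ↦ ?_⟩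
  have hdvd : ((m * n : ℕ) : ℤ) ∣ b ↔ (m : ℤ) ∣ b ∧ (n : ℤ) ∣ b := by
    push_cast
    exact ⟨fun h ↦ ⟨dvd_of_mul_right_dvd h, dvd_of_mul_left_dvd h⟩,
      fun h ↦ (Nat.isCoprime_iff_coprime.mpr hmn).mul_dvd h.1 h.2⟩
  simp only [idOnDivisors_apply, hdvd]
  split_ifs <;> simp_all

lemma moebius_mul_idOnDivisors_apply_prime_pow_succ (b : ℤ) {p : ℕ} (hp : p.Prime) (k : ℕ) :
    (μ * idOnDivisors b) (p ^ (k + 1)) =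
      (if (p : ℤ) ^ (k + 1) ∣ b then (p : ℤ) ^ (k + 1) else 0) -
        if (p : ℤ) ^ k ∣ b then (p : ℤ) ^ k else 0 := by
  rw [← intCoe_int μ, coe_moebius_mul_apply_prime_pow_succ _ hp, idOnDivisors_apply,
    idOnDivisors_apply]
  push_cast
  rfl

lemma moebius_mul_idOnDivisors_apply_prime_pow (b : ℤ) {p k : ℕ} (hp : p.Prime) (hk : k ≠ 0) :
    (μ * idOnDivisors b) (p ^ k) =
      if (p : ℤ) ^ k ∣ b then (Nat.totient (p ^ k) : ℤ)
      else μ (p ^ (k - b.natAbs.factorization p)) * (p : ℤ) ^ b.natAbs.factorization p := by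
  obtain ⟨j, rfl⟩ := Nat.exists_eq_add_one_of_ne_zero hk
  rw [moebius_mul_idOnDivisors_apply_prime_pow_succ b hp]
  by_cases hdvd : (p : ℤ) ^ (j + 1) ∣ b
  · rw [if_pos hdvd, if_pos hdvd, if_pos ((pow_dvd_pow _ j.le_succ).trans hdvd),
      Nat.totient_prime_pow_succ hp]
    push_cast [hp.one_le]
    ring
  have hb : b ≠ 0 := by rintro rfl; exact hdvd (dvd_zero _)
  simp only [Int.natCast_pow_dvd_iff_le_factorization hp hb, not_le] at hdvd ⊢
  simp only [hdvd.not_ge, if_false, zero_sub]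
  set v := b.natAbs.factorization p
  rcases (Nat.lt_succ_iff.mp hdvd).eq_or_lt with hv | hv
  · simp [hv, moebius_apply_prime hp]
  · rw [if_neg hv.not_ge, moebius_apply_prime_pow hp (by omega),
      if_neg (show j + 1 - v ≠ 1 by omega), neg_zero, zero_mul]

lemma pow_dvd_mul_of_moebius_mul_idOnDivisors_apply_ne_zero {b : ℤ} {p : ℕ} (hp : p.Prime)
    {k : ℕ} (h : (μ * idOnDivisors b) (p ^ k) ≠ 0) : (p : ℤ) ^ k ∣ b * p := by
  obtain _ | j := k
  · simp
  rw [moebius_mul_idOnDivisors_apply_prime_pow_succ b hp] at h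
  have hdvd : (p : ℤ) ^ j ∣ b := by
    by_contra hj
    have hj' : ¬ (p : ℤ) ^ (j + 1) ∣ b := fun h ↦ hj ((pow_dvd_pow _ j.le_succ).trans h)
    simp [hj, hj'] at h
  exact pow_succ (p : ℤ) j ▸ mul_dvd_mul_right hdvd _

lemma isMultiplicative_moebius_mul_idOnDivisors (b : ℤ) :
    (μ * idOnDivisors b).IsMultiplicative :=
  isMultiplicative_moebius.mul (isMultiplicative_idOnDivisors b)

lemma dvd_mul_prod_primeFactors_of_moebius_mul_idOnDivisors_ne_zero {b : ℤ} {q : ℕ}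
    (h : (μ * idOnDivisors b) q ≠ 0) : (q : ℤ) ∣ b * ∏ p ∈ q.primeFactors, (p : ℤ) := by
  have hq : q ≠ 0 := by rintro rfl; exact h map_zero
  rw [(isMultiplicative_moebius_mul_idOnDivisors b).multiplicative_factorization _ hq,
    Nat.prod_factorization_eq_prod_primeFactors] at h
  conv_lhs => rw [Nat.prod_primeFactors_pow_factorization hq]
  push_cast
  refine prod_dvd_of_coprime (fun p hp p' hp' hne ↦ ?_) fun p hp ↦ ?_
  · exact (Nat.isCoprime_iff_coprime.mpr ((Nat.coprime_primes (Nat.prime_of_mem_primeFactors hp)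
      (Nat.prime_of_mem_primeFactors hp')).mpr hne)).pow
  · exact (pow_dvd_mul_of_moebius_mul_idOnDivisors_apply_ne_zero (Nat.prime_of_mem_primeFactors hp)
      (prod_ne_zero_iff.mp h p hp)).trans (mul_dvd_mul_left b (dvd_prod_of_mem _ hp))

end ArithmeticFunction

open ArithmeticFunction

noncomputable def ramanujanSum (q : ℕ) [NeZero q] (b : ℤ) : ℂ :=
  ∑ t : ZMod q with IsUnit t, ZMod.stdAddChar ((b : ZMod q) * t)

lemma ramanujanSum_eq_moebius_mul_idOnDivisors (q : ℕ) [NeZero q] (b : ℤ) :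
    ramanujanSum q b = ((μ * idOnDivisors b) q : ℂ) := by
  have isUnit_indicator (t : ZMod q) (x : ℂ) :
      (if IsUnit t then x else 0) = ∑ d ∈ q.divisors, if d ∣ t.val then (μ d : ℂ) * x else 0 := by
    have isUnit_iff := ZMod.isUnit_iff_coprime t.val q
    rw [ZMod.natCast_zmod_val] at isUnit_iff
    rw [← sum_filter, ← sum_mul, ← Int.cast_sum, sum_moebius_divisors_filter_dvd (NeZero.ne q)]
    split_ifs <;> simp_all
  calc ramanujanSum q b
      = ∑ t : ZMod q, ∑ d ∈ q.divisors,
          if d ∣ t.val then (μ d : ℂ) * ZMod.stdAddChar ((b : ZMod q) * t) else 0 := by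
        simp_rw [ramanujanSum, sum_filter, isUnit_indicator]
    _ = ∑ d ∈ q.divisors, (μ d : ℂ) * ∑ t : ZMod q with d ∣ t.val,
          ZMod.stdAddChar ((b : ZMod q) * t) := by
        rw [sum_comm]
        simp_rw [sum_filter, mul_sum, mul_ite, mul_zero]
    _ = ∑ d ∈ q.divisors, (μ d : ℂ) * if ((q / d : ℕ) : ℤ) ∣ b then ((q / d : ℕ) : ℂ) else 0 :=
        sum_congr rfl fun d hd ↦ by
          rw [ZMod.sum_filter_dvd_val_stdAddChar_intCast_mul b
            (Nat.mul_div_cancel' (Nat.dvd_of_mem_divisors hd))]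
    _ = ((μ * idOnDivisors b) q : ℂ) := by
        rw [mul_apply, Nat.sum_divisorsAntidiagonal (fun d e ↦ μ d * idOnDivisors b e)]
        push_cast [idOnDivisors_apply]
        rfl

theorem primitive_character_shifted_sum_formula
    (q : ℕ) (hq : 1 ≤ q)
    (χ : DirichletCharacter ℂ q) (hχ : χ.IsPrimitive) (b : ℤ) :
    (∑ a ∈ Finset.range q,
        χ (a : ZMod q) * (starRingEnd ℂ) (χ ((a : ZMod q) + (b : ZMod q))) =
      ∏ p ∈ q.primeFactors,
        (if (p : ℤ) ^ (q.factorization p) ∣ b then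
            (Nat.totient (p ^ (q.factorization p)) : ℂ)
          else
            ((ArithmeticFunction.moebius
                (p ^ (q.factorization p - b.natAbs.factorization p)) : ℤ) : ℂ) *
              (p : ℂ) ^ (b.natAbs.factorization p))) ∧
    ((∑ a ∈ Finset.range q,
        χ (a : ZMod q) * (starRingEnd ℂ) (χ ((a : ZMod q) + (b : ZMod q))) ≠ 0) →
      (q : ℤ) ∣ b * ∏ p ∈ q.primeFactors, (p : ℤ)) := by
  have : NeZero q := ⟨by omega⟩
  have hsum : ∑ a ∈ range q, χ (a : ZMod q) * (starRingEnd ℂ) (χ ((a : ZMod q) + (b : ZMod q)))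
      = ((μ * idOnDivisors b) q : ℂ) := by
    rw [ZMod.sum_range_natCast_s16 (fun x ↦ χ x * (starRingEnd ℂ) (χ (x + b)))]
    simp_rw [← RCLike.star_def, MulChar.star_apply']
    rw [sum_mul_inv_apply_add_eq_sum_isUnit hχ
      (gaussSum_ne_zero_of_isPrimitive hχ (ZMod.isPrimitive_stdAddChar q))]
    exact ramanujanSum_eq_moebius_mul_idOnDivisors q b
  refine ⟨?_, fun h ↦ dvd_mul_prod_primeFactors_of_moebius_mul_idOnDivisors_ne_zero
    (by exact_mod_cast hsum ▸ h)⟩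
  rw [hsum, (isMultiplicative_moebius_mul_idOnDivisors b).multiplicative_factorization _
    (NeZero.ne q), Nat.prod_factorization_eq_prod_primeFactors, Int.cast_prod]
  refine prod_congr rfl fun p hp ↦ ?_
  have hp' := Nat.prime_of_mem_primeFactors hp
  rw [moebius_mul_idOnDivisors_apply_prime_pow b hp'
    (hp'.factorization_pos_of_dvd (NeZero.ne q) (Nat.dvd_of_mem_primeFactors hp)).ne']
  push_cast
  rfl
end
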